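/- Let λ, μ ∈ (0,1) and define f_{λ,μ}(θ) := λ^{−1/2 + 1/(1 − √μ e^{iθ})} for θ ∈ ℝ, where λ^z := exp(z ln λ). Set M := λ^{(1−√μ)/(1+√μ)}. Then ‖f_{λ,μ}‖_2 ≤ √(2π M), and the second derivative of f_{λ,μ} satisfies ‖f_{λ,μ}''‖_2 ≤ √M · √(2πμ) · ln(1/λ) · (1 + √μ ln(1/λ) + μ) / (1 − √μ)^4. -/

import Mathlib

open MeasureTheory

noncomputable def singularValues {n : ℕ} (A : Matrix (Fin n) (Fin n) ℂ) : Fin n → ℝ :=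
  fun i => Real.sqrt ((Matrix.isHermitian_conjTranspose_mul_self A).eigenvalues i)


/-- The symbol `f_{λ,μ}(θ) = λ^{-1/2 + 1/(1 - √μ e^{iθ})}`. -/
noncomputable def fSymb (lam mu : ℝ) : ℝ → ℂ :=
  fun θ => Complex.exp ((-1/2 + 1 / (1 - (Real.sqrt mu : ℂ) * Complex.exp (Complex.I * (θ : ℂ))))
    * (Real.log lam : ℂ))

/-- The L² norm over one period. -/
noncomputable def l2Norm (g : ℝ → ℂ) : ℝ :=
  Real.sqrt (∫ x in (0:ℝ)..(2 * Real.pi), ‖g x‖ ^ 2)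

/-!
Write `f(θ) = exp((-1/2 + 1/(1 - u)) c)` with `u = √μ e^{iθ}` and `c = ln λ ≤ 0`, so that
`|f| = λ^{Re(-1/2 + 1/(1 - u))}`. On the circle `|u| = √μ` we have `Re 1/(1 - u) ≥ 1/(1 + √μ)`,
hence `|f| ≤ λ^{(1-√μ)/(2(1+√μ))} = √M` pointwise. Differentiating twice with `u' = iu` gives
`f'' = -c u (1 - u² + c u)/(1 - u)⁴ · f`, and `|1 - u| ≥ 1 - √μ` bounds `|f''|` pointwise by
`√M √μ ln(1/λ) (1 + √μ ln(1/λ) + μ)/(1 - √μ)⁴`. Both L² bounds follow by integrating over a period.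
-/

open Complex

theorem Complex.inv_one_add_norm_le_re_inv_one_sub {u : ℂ} (hu : ‖u‖ < 1) :
    (1 + ‖u‖)⁻¹ ≤ ((1 - u)⁻¹).re := by
  have hne : 1 - u ≠ 0 := sub_ne_zero.mpr fun h => by simp [← h] at hu
  have hsq : ‖u‖ ^ 2 = u.re ^ 2 + u.im ^ 2 := by
    rw [← normSq_eq_norm_sq, normSq_apply]; ring
  have hre : -‖u‖ ≤ u.re := neg_le_of_abs_le (abs_re_le_norm u)
  have hpos : 0 < normSq (1 - u) := normSq_pos.mpr hne
  rw [inv_re, sub_re, one_re, inv_eq_one_div,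
    div_le_div_iff₀ (by positivity) hpos, normSq_apply]
  simp only [sub_re, one_re, sub_im, one_im]
  -- `(1 + ‖u‖)(1 - re u) - |1 - u|² = (1 - ‖u‖)(‖u‖ + re u)`
  nlinarith [mul_nonneg (sub_nonneg.mpr hu.le) (neg_le_iff_add_nonneg.mp hre)]

theorem Complex.norm_exp_mul_log {x : ℝ} (hx : 0 < x) (z : ℂ) :
    ‖exp (z * Real.log x)‖ = x ^ z.re := by
  rw [norm_exp, re_mul_ofReal, Real.rpow_def_of_pos hx, mul_comm]

theorem one_sub_abs_le_norm_one_sub_circleMap (R θ : ℝ) :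
    1 - |R| ≤ ‖1 - circleMap 0 R θ‖ := by
  simpa [norm_circleMap_zero] using norm_sub_norm_le (1 : ℂ) (circleMap 0 R θ)

theorem one_sub_circleMap_ne_zero {R : ℝ} (hR : |R| < 1) (θ : ℝ) : 1 - circleMap 0 R θ ≠ 0 :=
  norm_pos_iff.mp ((sub_pos.mpr hR).trans_le (one_sub_abs_le_norm_one_sub_circleMap R θ))

theorem abs_sqrt_lt_one {x : ℝ} (hx : x < 1) : |Real.sqrt x| < 1 := by
  rwa [abs_of_nonneg (Real.sqrt_nonneg x), Real.sqrt_lt' one_pos, one_pow]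

theorem fSymb_eq_circleMap (lam mu : ℝ) : fSymb lam mu =
    fun θ => exp ((-1/2 + (1 - circleMap 0 (Real.sqrt mu) θ)⁻¹) * Real.log lam) := by
  funext θ; simp [fSymb, circleMap, mul_comm I]

theorem norm_fSymb_le {lam mu : ℝ} (hlam0 : 0 < lam) (hlam1 : lam ≤ 1) (hmu : mu < 1) (θ : ℝ) :
    ‖fSymb lam mu θ‖ ≤ Real.sqrt (lam ^ ((1 - Real.sqrt mu) / (1 + Real.sqrt mu))) := by
  have hre := Complex.inv_one_add_norm_le_re_inv_one_sub
    ((norm_circleMap_zero _ θ).trans_lt (abs_sqrt_lt_one hmu))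
  rw [norm_circleMap_zero, abs_of_nonneg (Real.sqrt_nonneg mu)] at hre
  rw [fSymb_eq_circleMap, Complex.norm_exp_mul_log hlam0, Real.sqrt_eq_rpow (lam ^ _),
    ← Real.rpow_mul hlam0.le]
  refine Real.rpow_le_rpow_of_exponent_ge hlam0 hlam1 ?_
  calc (1 - Real.sqrt mu) / (1 + Real.sqrt mu) * (1 / 2) = -1/2 + (1 + Real.sqrt mu)⁻¹ := by
        field_simp; ring
    _ ≤ _ := by simpa using hre

theorem hasDerivAt_fSymb (lam : ℝ) {mu : ℝ} (hmu : mu < 1) (θ : ℝ) :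
    HasDerivAt (fSymb lam mu)
      (Real.log lam * I * circleMap 0 (Real.sqrt mu) θ / (1 - circleMap 0 (Real.sqrt mu) θ) ^ 2
        * fSymb lam mu θ) θ := by
  rw [fSymb_eq_circleMap]
  have hne := one_sub_circleMap_ne_zero (abs_sqrt_lt_one hmu) θ
  have hinv := ((hasDerivAt_circleMap 0 (Real.sqrt mu) θ).const_sub 1).fun_inv hne
  convert ((hinv.const_add (-1/2 : ℂ)).mul_const (Real.log lam : ℂ)).cexp using 1
  ring

theorem iteratedDeriv_two_fSymb (lam : ℝ) {mu : ℝ} (hmu : mu < 1) :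
    iteratedDeriv 2 (fSymb lam mu) = fun θ =>
      let u := circleMap 0 (Real.sqrt mu) θ;
      -(Real.log lam * u * (1 - u ^ 2 + Real.log lam * u) / (1 - u) ^ 4) * fSymb lam mu θ := by
  rw [iteratedDeriv_succ, iteratedDeriv_one,
    funext fun θ => (hasDerivAt_fSymb lam hmu θ).deriv]
  funext θ
  have hne := one_sub_circleMap_ne_zero (abs_sqrt_lt_one hmu) θ
  have hu := hasDerivAt_circleMap 0 (Real.sqrt mu) θ
  have hq := (hu.const_mul (Real.log lam * I : ℂ)).fun_div ((hu.const_sub 1).fun_pow 2)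
    (pow_ne_zero 2 hne)
  refine ((hq.fun_mul (hasDerivAt_fSymb lam hmu θ)).congr_deriv ?_).deriv
  field_simp
  linear_combination Real.log lam * circleMap 0 (Real.sqrt mu) θ * fSymb lam mu θ *
    (1 - circleMap 0 (Real.sqrt mu) θ ^ 2 + Real.log lam * circleMap 0 (Real.sqrt mu) θ) * I_sq

theorem norm_iteratedDeriv_two_fSymb_le {lam mu : ℝ} (hlam0 : 0 < lam) (hlam1 : lam ≤ 1)
    (hmu0 : 0 ≤ mu) (hmu1 : mu < 1) (θ : ℝ) :
    ‖iteratedDeriv 2 (fSymb lam mu) θ‖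
      ≤ Real.sqrt (lam ^ ((1 - Real.sqrt mu) / (1 + Real.sqrt mu))) * Real.sqrt mu
          * Real.log (1 / lam) * (1 + Real.sqrt mu * Real.log (1 / lam) + mu)
          / (1 - Real.sqrt mu) ^ 4 := by
  rw [iteratedDeriv_two_fSymb lam hmu1]
  set s := Real.sqrt mu
  set u := circleMap 0 s θ
  have hs1 : s < 1 := (abs_lt.mp (abs_sqrt_lt_one hmu1)).2
  have hu : ‖u‖ = s := by rw [norm_circleMap_zero, abs_of_nonneg (Real.sqrt_nonneg mu)]
  have hc : ‖(Real.log lam : ℂ)‖ = Real.log (1 / lam) := by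
    rw [norm_real, Real.norm_eq_abs, one_div, Real.log_inv,
      abs_of_nonpos (Real.log_nonpos hlam0.le hlam1)]
  have hnum : ‖1 - u ^ 2 + Real.log lam * u‖ ≤ 1 + s * Real.log (1 / lam) + mu := by
    calc ‖1 - u ^ 2 + Real.log lam * u‖ ≤ ‖(1 : ℂ)‖ + ‖u‖ ^ 2 + ‖(Real.log lam : ℂ)‖ * ‖u‖ := by
          grw [norm_add_le, norm_sub_le, norm_mul, norm_pow]
      _ = 1 + s * Real.log (1 / lam) + mu := by
          rw [norm_one, hu, hc, Real.sq_sqrt hmu0]; ring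
  have hden := one_sub_abs_le_norm_one_sub_circleMap s θ
  rw [abs_of_nonneg (Real.sqrt_nonneg mu)] at hden
  have hL : 0 ≤ Real.log (1 / lam) := hc ▸ norm_nonneg _
  have hF := norm_fSymb_le hlam0 hlam1 hmu1 θ
  rw [norm_mul, norm_neg, norm_div, norm_mul, norm_mul, norm_pow, hu, hc]
  calc Real.log (1 / lam) * s * ‖1 - u ^ 2 + Real.log lam * u‖ / ‖1 - u‖ ^ 4 * ‖fSymb lam mu θ‖
      ≤ Real.log (1 / lam) * s * (1 + s * Real.log (1 / lam) + mu) / (1 - s) ^ 4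
          * Real.sqrt (lam ^ ((1 - s) / (1 + s))) := by
        gcongr
    _ = _ := by ring

theorem contDiff_fSymb (lam : ℝ) {mu : ℝ} (hmu : mu < 1) : ContDiff ℝ ⊤ (fSymb lam mu) := by
  rw [fSymb_eq_circleMap]
  have hne := one_sub_circleMap_ne_zero (abs_sqrt_lt_one hmu)
  exact ((contDiff_const.add ((contDiff_const.sub (contDiff_circleMap 0 _)).inv hne)).mul
    contDiff_const).cexp

theorem l2Norm_le_of_norm_le {g : ℝ → ℂ} {B : ℝ} (hg : Continuous g) (h : ∀ x, ‖g x‖ ≤ B) :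
    l2Norm g ≤ Real.sqrt (2 * Real.pi) * B := by
  have hB : 0 ≤ B := (norm_nonneg _).trans (h 0)
  have hint : ∫ x in (0:ℝ)..(2 * Real.pi), ‖g x‖ ^ 2 ≤ ∫ _ in (0:ℝ)..(2 * Real.pi), B ^ 2 :=
    intervalIntegral.integral_mono_on (by positivity)
      ((by fun_prop : Continuous fun x => ‖g x‖ ^ 2).intervalIntegrable _ _)
      intervalIntegrable_const
      fun x _ => pow_le_pow_left₀ (norm_nonneg _) (h x) 2
  rw [intervalIntegral.integral_const, sub_zero, smul_eq_mul] at hint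
  calc l2Norm g ≤ Real.sqrt (2 * Real.pi * B ^ 2) := Real.sqrt_le_sqrt hint
    _ = Real.sqrt (2 * Real.pi) * B := by rw [Real.sqrt_mul (by positivity), Real.sqrt_sq hB]

/-- Bounds on the L² norms of the symbol `f_{λ,μ}` and of its second derivative. -/
theorem fSymb_l2_bounds
    (lam mu : ℝ) (hlam : lam ∈ Set.Ioo (0:ℝ) 1) (hmu : mu ∈ Set.Ioo (0:ℝ) 1) :
    l2Norm (fSymb lam mu)
        ≤ Real.sqrt (2 * Real.pi * lam ^ ((1 - Real.sqrt mu) / (1 + Real.sqrt mu)))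
      ∧ l2Norm (iteratedDeriv 2 (fSymb lam mu))
        ≤ Real.sqrt (lam ^ ((1 - Real.sqrt mu) / (1 + Real.sqrt mu)))
            * Real.sqrt (2 * Real.pi * mu) * Real.log (1 / lam)
            * (1 + Real.sqrt mu * Real.log (1 / lam) + mu) / (1 - Real.sqrt mu) ^ 4 := by
  obtain ⟨hlam0, hlam1⟩ := hlam
  obtain ⟨hmu0, hmu1⟩ := hmu
  have hf := contDiff_fSymb lam hmu1
  constructor
  · rw [Real.sqrt_mul (by positivity)]
    exact l2Norm_le_of_norm_le hf.continuous (norm_fSymb_le hlam0 hlam1.le hmu1)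
  · calc l2Norm (iteratedDeriv 2 (fSymb lam mu))
        ≤ Real.sqrt (2 * Real.pi) * _ :=
          l2Norm_le_of_norm_le (hf.continuous_iteratedDeriv 2 (by simp))
            (norm_iteratedDeriv_two_fSymb_le hlam0 hlam1.le hmu0.le hmu1)
      _ = _ := by rw [Real.sqrt_mul (by positivity) mu]; ring
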